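/- Let E be a finite-dimensional real inner product space and Λ ⊂ E a full-rank lattice. The map from the dual lattice Λ* to the group of continuous homomorphisms E/Λ → ℝ/ℤ sending y ∈ Λ* to the character (x mod Λ) ↦ (⟨x,y⟩ mod ℤ) is an isomorphism of topological groups from Λ* (with the discrete topology) onto the Pontryagin dual of the compact group E/Λ. -/

import Mathlib

/-! A continuous character of `E` lifts through the covering `ℝ → ℝ/ℤ` because `E` is simply
connected; by uniqueness of lifts the lift is additive, hence linear, hence `⟪·, y⟫` by Riesz, and
it factors through `E ⧸ Λ` exactly when `y ∈ Λ*`. The dual is discrete because `E ⧸ Λ` is compact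
(`Λ` contains a basis of `E`) and a small arc around `0` in `ℝ/ℤ` contains no nontrivial subgroup. -/

set_option maxHeartbeats 1000000
set_option synthInstance.maxHeartbeats 200000

open scoped RealInnerProductSpace

variable (E : Type*) [NormedAddCommGroup E] [InnerProductSpace ℝ E]

/-- the dual lattice `Λ* = {y ∈ E : ⟨x,y⟩ ∈ ℤ for all x ∈ Λ}` of a subgroup `Λ ⊆ E` -/
noncomputable def dualLattice (Λ : AddSubgroup E) : AddSubgroup E where
  carrier := {y | ∀ x ∈ Λ, ∃ m : ℤ, ⟪x, y⟫ = (m : ℝ)}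
  add_mem' := by
    rintro y z hy hz x hx
    obtain ⟨m, hm⟩ := hy x hx
    obtain ⟨m', hm'⟩ := hz x hx
    exact ⟨m + m', by rw [inner_add_right, hm, hm']; push_cast; ring⟩
  zero_mem' := fun x _ => ⟨0, by rw [inner_zero_right]; norm_num⟩
  neg_mem' := by
    rintro y hy x hx
    obtain ⟨m, hm⟩ := hy x hx
    exact ⟨-m, by rw [inner_neg_right, hm]; push_cast; ring⟩

theorem AddCircle.eq_of_coe_comp_eq {A : Type*} [TopologicalSpace A] [SimplyConnectedSpace A]
    [LocallyPathConnectedSpace A] (p : ℝ) {φ ψ : A → ℝ} (hφ : Continuous φ) (hψ : Continuous ψ)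
    {a₀ : A} (h₀ : φ a₀ = ψ a₀) (h : ∀ a, (φ a : AddCircle p) = ψ a) : φ = ψ :=
  congrArg DFunLike.coe <|
    ((AddCircle.isCoveringMap_coe p).existsUnique_continuousMap_lifts
      ⟨fun a => (ψ a : AddCircle p), by fun_prop⟩ a₀ (ψ a₀) rfl).unique
      (y₁ := ⟨φ, hφ⟩) (y₂ := ⟨ψ, hψ⟩) ⟨h₀, funext h⟩ ⟨rfl, rfl⟩

theorem AddCircle.discreteTopology_continuousAddMonoidHom {A : Type*} [AddMonoid A]
    [TopologicalSpace A] [CompactSpace A] {T : ℝ} (hT : T ≠ 0) :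
    DiscreteTopology (ContinuousAddMonoidHom A (AddCircle T)) := by
  let U : Set (AddCircle T) := AddCircle.toCircle ⁻¹' Circle.centeredArc (Real.pi / 2)
  let W : Set (ContinuousAddMonoidHom A (AddCircle T)) := {χ | Set.MapsTo χ Set.univ U}
  have hW : IsOpen W := isOpen_induced (ContinuousMap.isOpen_setOfPred_mapsTo isCompact_univ
      ((Circle.isOpen_centeredArc _).preimage AddCircle.continuous_toCircle))
  have hW0 : W = {0} := by
    ext χ
    refine ⟨fun hχ => ?_, ?_⟩
    · ext a
      refine AddCircle.injective_toCircle hT ?_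
      show _ = AddCircle.toCircle 0
      rw [AddCircle.toCircle_zero]
      refine Circle.eq_one_of_forall_pow_mem_centeredArc_pi_div_two fun n _ => ?_
      rw [← AddCircle.toCircle_nsmul, ← map_nsmul]
      exact hχ (Set.mem_univ _)
    · rintro rfl _ _
      simp [U, Circle.mem_centeredArc (by linarith [Real.pi_pos] : Real.pi / 2 ≤ Real.pi),
        Real.pi_pos]
  exact discreteTopology_of_isOpen_singleton_zero (hW0 ▸ hW)

section NormedSpace

variable {V : Type*} [NormedAddCommGroup V] [NormedSpace ℝ V]

theorem AddCircle.exists_continuousLinearMap_eq (p : ℝ) (g : V →+ AddCircle p)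
    (hg : Continuous g) : ∃ φ : V →L[ℝ] ℝ, ∀ x, g x = φ x := by
  obtain ⟨F, ⟨hF₀, hF⟩, -⟩ := (AddCircle.isCoveringMap_coe p).existsUnique_continuousMap_lifts
    ⟨g, hg⟩ 0 0 (by simp)
  have hFg (x : V) : (F x : AddCircle p) = g x := congrFun hF x
  -- `x ↦ F (x + y) - F y` is another lift of `g` vanishing at `0`
  have hF_add (x y : V) : F (x + y) = F x + F y := by
    have := AddCircle.eq_of_coe_comp_eq p (φ := fun x => F (x + y) - F y) (ψ := F)
      (by fun_prop) F.continuous (a₀ := 0) (by simp [hF₀]) (fun x => by simp [hFg, map_add])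
    linarith [congrFun this x]
  exact ⟨(AddMonoidHom.mk' F hF_add).toRealLinearMap F.continuous, fun x => (hFg x).symm⟩

theorem compactSpace_quotient_of_span_eq_top [FiniteDimensional ℝ V] (Λ : AddSubgroup V)
    (hspan : Submodule.span ℝ (Λ : Set V) = ⊤) : CompactSpace (V ⧸ Λ) := by
  let b := Module.Basis.ofSpan hspan.ge
  have hbΛ : Submodule.span ℤ (Set.range b) ≤ Λ.toIntSubmodule :=
    Submodule.span_le.mpr (Module.Basis.ofSpan_subset _)
  have himage : QuotientAddGroup.mk '' closure (ZSpan.fundamentalDomain b) =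
      (Set.univ : Set (V ⧸ Λ)) := by
    refine Set.eq_univ_of_forall fun x => ?_
    induction x using QuotientAddGroup.induction_on with | H x => ?_
    refine ⟨ZSpan.fract b x, subset_closure (ZSpan.fract_mem_fundamentalDomain b x), ?_⟩
    rw [QuotientAddGroup.eq_iff_sub_mem, ZSpan.fract_apply]
    simpa using Λ.neg_mem (hbΛ (ZSpan.floor b x).2)
  exact ⟨himage ▸
    (ZSpan.fundamentalDomain_isBounded b).isCompact_closure.image continuous_quotient_mk'⟩

end NormedSpace

section Characters

variable {E}

theorem exists_inner_eq_of_continuous [CompleteSpace E] (g : E →+ AddCircle (1 : ℝ))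
    (hg : Continuous g) : ∃ y : E, ∀ x, g x = (⟪x, y⟫ : ℝ) := by
  obtain ⟨φ, hφ⟩ := AddCircle.exists_continuousLinearMap_eq 1 g hg
  exact ⟨(InnerProductSpace.toDual ℝ E).symm φ, fun x => by
    rw [hφ, real_inner_comm, InnerProductSpace.toDual_symm_apply]⟩

theorem eq_zero_of_forall_inner_coe_eq_zero {y : E}
    (h : ∀ x, (⟪x, y⟫ : AddCircle (1 : ℝ)) = 0) : y = 0 := by
  have := AddCircle.eq_of_coe_comp_eq 1 (φ := fun x => ⟪x, y⟫) (ψ := fun _ => 0)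
    (by fun_prop) continuous_const (a₀ := 0) (by simp) (by simpa using h)
  simpa using congrFun this y

theorem mem_dualLattice_iff_coe_inner {Λ : AddSubgroup E} {y : E} :
    y ∈ dualLattice E Λ ↔ ∀ x ∈ Λ, (⟪x, y⟫ : AddCircle (1 : ℝ)) = 0 := by
  refine forall₂_congr fun x _ => ?_
  rw [AddCircle.coe_eq_zero_iff]
  simp [eq_comm]

variable (Λ : AddSubgroup E)

noncomputable def dualLatticeCharacter :
    dualLattice E Λ →+ ContinuousAddMonoidHom (E ⧸ Λ) (AddCircle (1 : ℝ)) where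
  toFun y :=
    { toAddMonoidHom := QuotientAddGroup.lift Λ
        (AddMonoidHom.mk' (fun x => (⟪x, (y : E)⟫ : AddCircle (1 : ℝ)))
          fun x x' => by rw [inner_add_left, AddCircle.coe_add])
        (mem_dualLattice_iff_coe_inner.mp y.2)
      continuous_toFun := (QuotientAddGroup.isQuotientMap_mk Λ).continuous_iff.mpr
        (continuous_quotient_mk'.comp (continuous_id.inner continuous_const)) }
  map_zero' := by
    ext x
    induction x using QuotientAddGroup.induction_on
    exact congrArg _ (inner_zero_right _)
  map_add' _ _ := by
    ext x
    induction x using QuotientAddGroup.induction_on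
    exact (congrArg _ (inner_add_right _ _ _)).trans (AddCircle.coe_add 1 _ _)

theorem dualLatticeCharacter_apply_mk (y : dualLattice E Λ) (x : E) :
    dualLatticeCharacter Λ y x = (⟪x, (y : E)⟫ : ℝ) :=
  rfl

theorem dualLatticeCharacter_injective : Function.Injective (dualLatticeCharacter Λ) :=
  (injective_iff_map_eq_zero _).mpr fun _ hy => Subtype.ext <|
    eq_zero_of_forall_inner_coe_eq_zero fun x => DFunLike.congr_fun hy (x : E ⧸ Λ)

theorem dualLatticeCharacter_surjective [CompleteSpace E] :
    Function.Surjective (dualLatticeCharacter Λ) := by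
  intro χ
  let χE := χ.toAddMonoidHom.comp (QuotientAddGroup.mk' Λ)
  obtain ⟨y, hy⟩ := exists_inner_eq_of_continuous χE (χ.continuous.comp continuous_quotient_mk')
  have hyΛ : y ∈ dualLattice E Λ := mem_dualLattice_iff_coe_inner.mpr fun x hx => by
    rw [← hy]
    simp [χE, (QuotientAddGroup.eq_zero_iff x).mpr hx]
  refine ⟨⟨y, hyΛ⟩, ContinuousAddMonoidHom.ext fun x => ?_⟩
  induction x using QuotientAddGroup.induction_on with | H x => exact (hy x).symm

end Characters

theorem statement8 [FiniteDimensional ℝ E] (Λ : AddSubgroup E)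
    (hspan : Submodule.span ℝ (Λ : Set E) = ⊤) :
    DiscreteTopology (ContinuousAddMonoidHom (E ⧸ Λ) (AddCircle (1 : ℝ))) ∧
    ∃ e : dualLattice E Λ ≃+ ContinuousAddMonoidHom (E ⧸ Λ) (AddCircle (1 : ℝ)),
      ∀ (y : dualLattice E Λ) (x : E),
        e y (QuotientAddGroup.mk x) = ((⟪x, (y : E)⟫ : ℝ) : AddCircle (1 : ℝ)) := by
  have := compactSpace_quotient_of_span_eq_top Λ hspan
  exact ⟨AddCircle.discreteTopology_continuousAddMonoidHom one_ne_zero,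
    AddEquiv.ofBijective (dualLatticeCharacter Λ)
      ⟨dualLatticeCharacter_injective Λ, dualLatticeCharacter_surjective Λ⟩,
    dualLatticeCharacter_apply_mk Λ⟩
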